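/- arXiv:math/0512206 — 7 statements merged into one kernel-verified Lean document; each statement's English description precedes it below -/
import Mathlib

section
/- Let λ be a bipartition of n and suppose λ has a removable node A such that λ∖A = (λ∖A)^, i.e., the bipartition obtained from λ by removing the node A is invariant under swapping its two components. Then for every pair of removable nodes B, C of λ with C ≠ A, one has λ∖B ≠ (λ∖C)^. In particular, for every removable node C of λ with C ≠ A, one has λ∖C ≠ (λ∖C)^. -/
/-- A cell `a` of a Young diagram `μ` is removable if it belongs to `μ` and deleting it
again yields a Young diagram (i.e. a lower set). -/
def YoungDiagram.IsRemovable (μ : YoungDiagram) (a : ℕ × ℕ) : Prop :=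
  a ∈ μ ∧ IsLowerSet ((μ.cells.erase a : Finset (ℕ × ℕ)) : Set (ℕ × ℕ))

/-- The Young diagram obtained by removing a removable cell. -/
def YoungDiagram.eraseCell (μ : YoungDiagram) (a : ℕ × ℕ) (h : μ.IsRemovable a) :
    YoungDiagram :=
  ⟨μ.cells.erase a, h.2⟩

/-- A bipartition of `n`: an ordered pair of Young diagrams whose total number of cells
is `n`. -/
structure Bipartition (n : ℕ) where
  fst : YoungDiagram
  snd : YoungDiagram
  card_eq : fst.card + snd.card = n

namespace Bipartition

/-- The bipartition `λ^` obtained by swapping the two components. -/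
def swap {n : ℕ} (l : Bipartition n) : Bipartition n :=
  ⟨l.snd, l.fst, by have := l.card_eq; omega⟩

/-- The component of a bipartition indexed by `c : Bool`
(`false` = first component, `true` = second component). -/
def component {n : ℕ} (l : Bipartition n) (c : Bool) : YoungDiagram :=
  cond c l.snd l.fst

/-- A node `(c, i, j)` of a bipartition is removable if the corresponding cell of the
component indexed by `c` is removable. -/
def IsRemovable {n : ℕ} (l : Bipartition n) (A : Bool × ℕ × ℕ) : Prop :=
  (l.component A.1).IsRemovable A.2

/-- The bipartition of `n - 1` obtained by removing a removable node. -/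
def erase {n : ℕ} (l : Bipartition n) :
    (A : Bool × ℕ × ℕ) → l.IsRemovable A → Bipartition (n - 1)
  | (false, a), h =>
      ⟨l.fst.eraseCell a h, l.snd, by
        have hc := l.card_eq
        have ha : a ∈ l.fst.cells := h.1
        have hpos : 0 < l.fst.card := Finset.card_pos.2 ⟨a, ha⟩
        simp only [YoungDiagram.eraseCell, YoungDiagram.card,
          Finset.card_erase_of_mem ha] at *
        omega⟩
  | (true, a), h =>
      ⟨l.fst, l.snd.eraseCell a h, by
        have hc := l.card_eq
        have ha : a ∈ l.snd.cells := h.1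
        have hpos : 0 < l.snd.card := Finset.card_pos.2 ⟨a, ha⟩
        simp only [YoungDiagram.eraseCell, YoungDiagram.card,
          Finset.card_erase_of_mem ha] at *
        omega⟩

end Bipartition

lemma cardContra {s t : Finset (ℕ × ℕ)} {a : ℕ × ℕ} (ha : a ∈ s)
    (h1 : s.erase a = t) (h2 : s = t) : False := by
  have h3 : (s.erase a).card = s.card - 1 := Finset.card_erase_of_mem ha
  have h4 : 0 < s.card := Finset.card_pos.2 ⟨a, ha⟩
  rw [h1, ← h2] at h3
  omega

lemma eraseContra {s : Finset (ℕ × ℕ)} {a c : ℕ × ℕ} (ha : a ∈ s) (hne : a ≠ c)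
    (h : s.erase a = s.erase c) : False := by
  have h1 : a ∈ s.erase c := Finset.mem_erase.2 ⟨hne, ha⟩
  rw [← h] at h1
  exact Finset.notMem_erase a s h1

lemma twoContra {s t : Finset (ℕ × ℕ)} {a c : ℕ × ℕ} (ha : a ∈ s) (hc : c ∈ t)
    (h1 : s.erase a = t) (h2 : t.erase c = s) : False := by
  have h3 : (s.erase a).card = s.card - 1 := Finset.card_erase_of_mem ha
  have h4 : (t.erase c).card = t.card - 1 := Finset.card_erase_of_mem hc
  have h5 : 0 < s.card := Finset.card_pos.2 ⟨a, ha⟩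
  have h6 : 0 < t.card := Finset.card_pos.2 ⟨c, hc⟩
  rw [h1] at h3; rw [h2] at h4
  omega

/-- If `λ` is a bipartition of `n` with a removable node `A` such that
`λ∖A = (λ∖A)^`, then for every pair of removable nodes `B, C` of `λ` with `C ≠ A` one has
`λ∖B ≠ (λ∖C)^`; in particular `λ∖C ≠ (λ∖C)^` for every removable node `C ≠ A`. -/
theorem stmt0 {n : ℕ} (l : Bipartition n) (A : Bool × ℕ × ℕ) (hA : l.IsRemovable A)
    (hsym : l.erase A hA = (l.erase A hA).swap) :
    (∀ (B C : Bool × ℕ × ℕ) (hB : l.IsRemovable B) (hC : l.IsRemovable C),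
      C ≠ A → l.erase B hB ≠ (l.erase C hC).swap) ∧
    (∀ (C : Bool × ℕ × ℕ) (hC : l.IsRemovable C),
      C ≠ A → l.erase C hC ≠ (l.erase C hC).swap) := by
  have main : ∀ (B C : Bool × ℕ × ℕ) (hB : l.IsRemovable B) (hC : l.IsRemovable C),
      C ≠ A → l.erase B hB ≠ (l.erase C hC).swap := by
    obtain ⟨cA, a⟩ := A
    intro B C hB hC hCA heq
    obtain ⟨cB, b⟩ := B
    obtain ⟨cC, c⟩ := C
    have haA : a ∈ (l.component cA).cells := hA.1
    have hbB : b ∈ (l.component cB).cells := hB.1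
    have hcC : c ∈ (l.component cC).cells := hC.1
    cases cA with
    | false =>
      have e1 : l.fst.cells.erase a = l.snd.cells :=
        congrArg (fun x => x.fst.cells) hsym
      cases cB with
      | false =>
        cases cC with
        | false =>
          have hac : a ≠ c := fun h => hCA (by rw [h])
          have f2 : l.snd.cells = l.fst.cells.erase c :=
            congrArg (fun x => x.snd.cells) heq
          exact eraseContra haA hac (e1.trans f2)
        | true =>
          have f2 : l.snd.cells = l.fst.cells :=
            congrArg (fun x => x.snd.cells) heq
          exact cardContra haA e1 f2.symm
      | true =>
        cases cC with
        | false =>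
          have f1 : l.fst.cells = l.snd.cells :=
            congrArg (fun x => x.fst.cells) heq
          exact cardContra haA e1 f1
        | true =>
          have f1 : l.fst.cells = l.snd.cells.erase c :=
            congrArg (fun x => x.fst.cells) heq
          exact twoContra haA hcC e1 f1.symm
    | true =>
      have e1 : l.fst.cells = l.snd.cells.erase a :=
        congrArg (fun x => x.fst.cells) hsym
      cases cB with
      | false =>
        cases cC with
        | false =>
          have f2 : l.snd.cells = l.fst.cells.erase c :=
            congrArg (fun x => x.snd.cells) heq
          exact twoContra haA hcC e1.symm f2.symm
        | true =>
          have f2 : l.snd.cells = l.fst.cells :=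
            congrArg (fun x => x.snd.cells) heq
          exact cardContra haA e1.symm f2
      | true =>
        cases cC with
        | false =>
          have f1 : l.fst.cells = l.snd.cells :=
            congrArg (fun x => x.fst.cells) heq
          exact cardContra haA e1.symm f1.symm
        | true =>
          have hac : a ≠ c := fun h => hCA (by rw [h])
          have f1 : l.fst.cells = l.snd.cells.erase c :=
            congrArg (fun x => x.fst.cells) heq
          exact eraseContra haA hac (e1.symm.trans f1)
  exact ⟨main, fun C hC hCA => main C C hC hC hCA⟩
end

section
/- Let λ be a bipartition of n with λ ≠ λ^. Then for any two removable nodes B, C of λ with B ≠ C, one has λ∖B ≠ (λ∖C)^. -/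
lemma erase_inj_aux {s : Finset (ℕ × ℕ)} {a b : ℕ × ℕ} (ha : a ∈ s) (hb : b ∈ s)
    (h : s.erase a = s.erase b) : a = b := by
  by_contra hab
  have : a ∈ s.erase b := Finset.mem_erase.2 ⟨hab, ha⟩
  rw [← h] at this
  exact (Finset.mem_erase.1 this).1 rfl

lemma bip_eq_iff {n : ℕ} {l m : Bipartition n} (h : l = m) :
    l.fst = m.fst ∧ l.snd = m.snd := by subst h; exact ⟨rfl, rfl⟩

lemma fst_ne_snd {n : ℕ} {l : Bipartition n} (hl : l ≠ l.swap) : l.fst ≠ l.snd := by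
  intro h
  apply hl
  cases l with
  | mk f s c => simp only [Bipartition.swap] at h ⊢; cases h; rfl

/-- Let `λ` be a bipartition of `n` with `λ ≠ λ^`. Then for any two
removable nodes `B, C` of `λ` with `B ≠ C`, one has `λ∖B ≠ (λ∖C)^`. -/
theorem stmt2 {n : ℕ} (l : Bipartition n) (hl : l ≠ l.swap)
    (B C : Bool × ℕ × ℕ) (hB : l.IsRemovable B) (hC : l.IsRemovable C) (hBC : B ≠ C) :
    l.erase B hB ≠ (l.erase C hC).swap := by
  intro h
  have hfs := fst_ne_snd hl
  obtain ⟨bc, b⟩ := B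
  obtain ⟨cc, c⟩ := C
  cases bc <;> cases cc <;>
    obtain ⟨h1, h2⟩ := bip_eq_iff h <;>
    simp only [Bipartition.erase, Bipartition.swap, YoungDiagram.eraseCell] at h1 h2
  · -- false false: h1 : fst∖b = snd, h2 : snd = fst∖c
    rw [h2] at h1
    have : b = c := erase_inj_aux hB.1 hC.1 (congrArg YoungDiagram.cells h1)
    exact hBC (by simp [this])
  · -- false true: h2 : snd = fst
    exact hfs h2.symm
  · -- true false: h1 : fst = snd
    exact hfs h1
  · -- true true: h1 : fst = snd∖c, h2 : snd∖b = fst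
    rw [h1] at h2
    have : b = c := erase_inj_aux hB.1 hC.1 (congrArg YoungDiagram.cells h2)
    exact hBC (by simp [this])
end

section
/- Let ℓ ≥ 1 be an integer and set e = 2ℓ. Let λ be a bipartition of n with removable nodes A, B, C such that res(B) ≠ res(A) and res(C) ≠ res(A) (the nodes B and C are allowed to coincide). Suppose that N_s(λ∖A) = N_{s+ℓ}(λ∖A) for all s ∈ ℤ/eℤ. Then there exists s ∈ ℤ/eℤ with N_s(λ∖B) ≠ N_{s+ℓ}(λ∖C). -/
/-- The residue of a node `(c, i, j)`: the class of `j - i` in `ℤ/eℤ`. -/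
def nodeRes (e : ℕ) (A : Bool × ℕ × ℕ) : ZMod e :=
  (A.2.2 : ZMod e) - (A.2.1 : ZMod e)

/-- `N_s(μ)`: the number of nodes of the bipartition `μ` whose residue is `s ∈ ℤ/eℤ`. -/
def Bipartition.count {n : ℕ} (e : ℕ) (l : Bipartition n) (s : ZMod e) : ℕ :=
  (l.fst.cells.filter fun a => ((a.2 : ZMod e) - (a.1 : ZMod e)) = s).card +
    (l.snd.cells.filter fun a => ((a.2 : ZMod e) - (a.1 : ZMod e)) = s).card

/-!
Removing a node of residue `r` lowers `N_r` by one and leaves every other `N_s` unchanged.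
Put `a = res A`; since `ℓ ≢ 0 (mod 2ℓ)`, `a ≠ a + ℓ`. The symmetry of `λ∖A` then gives
`N_a(λ) = N_{a+ℓ}(λ) + 1`, whereas `N_a(λ∖B) = N_a(λ)` and `N_{a+ℓ}(λ∖C) ≤ N_{a+ℓ}(λ)`,
so `s = a` works.
-/

lemma Finset.card_filter_eq_card_filter_erase_add {α : Type*} [DecidableEq α]
    {t : Finset α} {a : α} (ha : a ∈ t) (p : α → Prop) [DecidablePred p] :
    (t.filter p).card = ((t.erase a).filter p).card + if p a then 1 else 0 := by
  rw [Finset.card_filter, Finset.card_filter, ← Finset.add_sum_erase t _ ha, add_comm]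

namespace Bipartition

variable {n e : ℕ} (l : Bipartition n) (X : Bool × ℕ × ℕ) (h : l.IsRemovable X)

lemma count_eq_count_erase_add (s : ZMod e) :
    l.count e s = (l.erase X h).count e s + if nodeRes e X = s then 1 else 0 := by
  obtain ⟨c, a⟩ := X
  have hcells := Finset.card_filter_eq_card_filter_erase_add h.1
    fun x : ℕ × ℕ => (x.2 : ZMod e) - x.1 = s
  cases c
  · simp only [component, cond_false] at hcells
    simp only [count, erase, YoungDiagram.eraseCell, nodeRes, hcells]
    exact add_right_comm _ _ _
  · simp only [component, cond_true] at hcells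
    simp only [count, erase, YoungDiagram.eraseCell, nodeRes, hcells]
    exact (add_assoc _ _ _).symm

lemma count_erase_add_one_self :
    (l.erase X h).count e (nodeRes e X) + 1 = l.count e (nodeRes e X) := by
  simp [count_eq_count_erase_add l X h]

lemma count_erase_of_nodeRes_ne {s : ZMod e} (hs : nodeRes e X ≠ s) :
    (l.erase X h).count e s = l.count e s := by
  simp [count_eq_count_erase_add l X h, hs]

lemma count_erase_le (s : ZMod e) : (l.erase X h).count e s ≤ l.count e s := by
  rw [count_eq_count_erase_add l X h s]
  exact Nat.le_add_right _ _

end Bipartition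

lemma ZMod.add_half_ne_self {ℓ : ℕ} (hℓ : 1 ≤ ℓ) (a : ZMod (2 * ℓ)) :
    a + (ℓ : ZMod (2 * ℓ)) ≠ a := by
  rw [Ne, add_eq_left, ZMod.natCast_eq_zero_iff]
  intro hdvd
  have := Nat.le_of_dvd hℓ hdvd
  omega

theorem stmt5_general (ℓ : ℕ) (hℓ : 1 ≤ ℓ) {n : ℕ} (l : Bipartition n)
    (A B C : Bool × ℕ × ℕ)
    (hA : l.IsRemovable A) (hB : l.IsRemovable B) (hC : l.IsRemovable C)
    (hrB : nodeRes (2 * ℓ) B ≠ nodeRes (2 * ℓ) A)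
    (hsym : ∀ s : ZMod (2 * ℓ),
      (l.erase A hA).count (2 * ℓ) s =
        (l.erase A hA).count (2 * ℓ) (s + (ℓ : ZMod (2 * ℓ)))) :
    ∃ s : ZMod (2 * ℓ),
      (l.erase B hB).count (2 * ℓ) s ≠
        (l.erase C hC).count (2 * ℓ) (s + (ℓ : ZMod (2 * ℓ))) := by
  set a := nodeRes (2 * ℓ) A
  refine ⟨a, ne_of_gt ?_⟩
  calc (l.erase C hC).count (2 * ℓ) (a + ℓ)
      ≤ l.count (2 * ℓ) (a + ℓ) := l.count_erase_le C hC _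
    _ = (l.erase A hA).count (2 * ℓ) (a + ℓ) :=
        (l.count_erase_of_nodeRes_ne A hA (ZMod.add_half_ne_self hℓ a).symm).symm
    _ = (l.erase A hA).count (2 * ℓ) a := (hsym a).symm
    _ < l.count (2 * ℓ) a := (Nat.lt_succ_self _).trans_eq (l.count_erase_add_one_self A hA)
    _ = (l.erase B hB).count (2 * ℓ) a := (l.count_erase_of_nodeRes_ne B hB hrB).symm

/-- Let `ℓ ≥ 1`, `e = 2ℓ`, and let `λ` be a bipartition of `n` with
removable nodes `A, B, C` such that `res B ≠ res A` and `res C ≠ res A`. If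
`N_s(λ∖A) = N_{s+ℓ}(λ∖A)` for all `s ∈ ℤ/eℤ`, then there exists `s ∈ ℤ/eℤ` with
`N_s(λ∖B) ≠ N_{s+ℓ}(λ∖C)`. -/
theorem stmt5 (ℓ : ℕ) (hℓ : 1 ≤ ℓ) {n : ℕ} (l : Bipartition n)
    (A B C : Bool × ℕ × ℕ)
    (hA : l.IsRemovable A) (hB : l.IsRemovable B) (hC : l.IsRemovable C)
    (hrB : nodeRes (2 * ℓ) B ≠ nodeRes (2 * ℓ) A)
    (hrC : nodeRes (2 * ℓ) C ≠ nodeRes (2 * ℓ) A)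
    (hsym : ∀ s : ZMod (2 * ℓ),
      (l.erase A hA).count (2 * ℓ) s =
        (l.erase A hA).count (2 * ℓ) (s + (ℓ : ZMod (2 * ℓ)))) :
    ∃ s : ZMod (2 * ℓ),
      (l.erase B hB).count (2 * ℓ) s ≠
        (l.erase C hC).count (2 * ℓ) (s + (ℓ : ZMod (2 * ℓ))) :=
  stmt5_general ℓ hℓ l A B C hA hB hC hrB hsym
end

section
/- Let ℓ ≥ 1 be an integer and set e = 2ℓ. Let λ be a bipartition of n with removable nodes B and C such that res(B) ≠ res(C) and res(B) ≠ res(C) + ℓ. Then there exists s ∈ ℤ/eℤ with N_s(λ∖B) ≠ N_{s+ℓ}(λ∖C). -/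
/-!
Removing a node `A` lowers `N_{res A}` by one and leaves every other `N_s` unchanged. If
`N_s(λ∖B) = N_{s+ℓ}(λ∖C)` held for all `s`, then, writing `b = res B` and using `2ℓ = 0` in
`ℤ/eℤ`, the instance `s = b` would give `N_b(λ) = N_{b+ℓ}(λ) + 1` (as `res C ≠ b + ℓ`), and the
instance `s = b + ℓ` would give `N_{b+ℓ}(λ) ≥ N_b(λ)` (as `res C ≠ b`).
-/

theorem Finset.card_filter_erase_add_ite {α : Type*} [DecidableEq α] {t : Finset α}
    {a : α} (p : α → Prop) [DecidablePred p] (ha : a ∈ t) :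
    ((t.erase a).filter p).card + (if p a then 1 else 0) = (t.filter p).card := by
  simp only [Finset.card_filter]
  exact Finset.sum_erase_add t _ ha

namespace Bipartition

theorem count_erase_add_ite {n : ℕ} (e : ℕ) (l : Bipartition n) (A : Bool × ℕ × ℕ)
    (h : l.IsRemovable A) (s : ZMod e) :
    (l.erase A h).count e s + (if nodeRes e A = s then 1 else 0) = l.count e s := by
  obtain ⟨_ | _, a⟩ := A
  · have key := Finset.card_filter_erase_add_ite
      (fun x : ℕ × ℕ => ((x.2 : ZMod e) - (x.1 : ZMod e)) = s) (t := l.fst.cells) h.1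
    rw [count, count, ← key]
    exact add_right_comm _ _ _
  · have key := Finset.card_filter_erase_add_ite
      (fun x : ℕ × ℕ => ((x.2 : ZMod e) - (x.1 : ZMod e)) = s) (t := l.snd.cells) h.1
    rw [count, count, ← key]
    exact add_assoc _ _ _

end Bipartition

theorem ZMod.add_natCast_add_natCast_two_mul (ℓ : ℕ) (x : ZMod (2 * ℓ)) :
    x + ℓ + ℓ = x := by
  rw [add_assoc, ← Nat.cast_add, ← two_mul, ZMod.natCast_self, add_zero]

theorem stmt6_general (ℓ : ℕ) {n : ℕ} (l : Bipartition n)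
    (B C : Bool × ℕ × ℕ)
    (hB : l.IsRemovable B) (hC : l.IsRemovable C)
    (hr1 : nodeRes (2 * ℓ) B ≠ nodeRes (2 * ℓ) C)
    (hr2 : nodeRes (2 * ℓ) B ≠ nodeRes (2 * ℓ) C + (ℓ : ZMod (2 * ℓ))) :
    ∃ s : ZMod (2 * ℓ),
      (l.erase B hB).count (2 * ℓ) s ≠
        (l.erase C hC).count (2 * ℓ) (s + (ℓ : ZMod (2 * ℓ))) := by
  by_contra! hcon
  have shift : ∀ s : ZMod (2 * ℓ),
      l.count (2 * ℓ) s + (if nodeRes (2 * ℓ) C = s + ℓ then 1 else 0) =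
        l.count (2 * ℓ) (s + ℓ) + (if nodeRes (2 * ℓ) B = s then 1 else 0) := by
    intro s
    have hBs := l.count_erase_add_ite (2 * ℓ) B hB s
    have hCs := l.count_erase_add_ite (2 * ℓ) C hC (s + ℓ)
    have := hcon s
    omega
  have at_b := shift (nodeRes (2 * ℓ) B)
  have at_b_add := shift (nodeRes (2 * ℓ) B + ℓ)
  rw [ZMod.add_natCast_add_natCast_two_mul] at at_b_add
  rw [if_neg fun h => hr2 (by rw [h, ZMod.add_natCast_add_natCast_two_mul]), if_pos rfl] at at_b
  rw [if_neg (Ne.symm hr1)] at at_b_add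
  omega

/-- Let `ℓ ≥ 1`, `e = 2ℓ`, and let `λ` be a bipartition of `n` with
removable nodes `B, C` such that `res B ≠ res C` and `res B ≠ res C + ℓ`. Then there
exists `s ∈ ℤ/eℤ` with `N_s(λ∖B) ≠ N_{s+ℓ}(λ∖C)`. -/
theorem stmt6 (ℓ : ℕ) (hℓ : 1 ≤ ℓ) {n : ℕ} (l : Bipartition n)
    (B C : Bool × ℕ × ℕ)
    (hB : l.IsRemovable B) (hC : l.IsRemovable C)
    (hr1 : nodeRes (2 * ℓ) B ≠ nodeRes (2 * ℓ) C)
    (hr2 : nodeRes (2 * ℓ) B ≠ nodeRes (2 * ℓ) C + (ℓ : ZMod (2 * ℓ))) :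
    ∃ s : ZMod (2 * ℓ),
      (l.erase B hB).count (2 * ℓ) s ≠
        (l.erase C hC).count (2 * ℓ) (s + (ℓ : ZMod (2 * ℓ))) :=
  stmt6_general ℓ l B C hB hC hr1 hr2
end

section
/- Let K be a field, let q ∈ K be invertible, let n ≥ 3, and let H(B_n) be the Hecke algebra of type B_n over K with parameters (q, 1). Set T_u := T_0 T_1 T_0 in H(B_n). Then the following relations hold in H(B_n): (T_u + 1)(T_u − q) = 0; T_u T_1 = T_1 T_u; T_u T_2 T_u = T_2 T_u T_2; and T_u T_i = T_i T_u for all 3 ≤ i ≤ n − 1. -/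
open FreeAlgebra

/-- The defining relations of the Hecke algebra of type `B_n` with parameters `(q, 1)`
inside the free `K`-algebra on generators `T_0, …, T_{n-1}`:
`T_0² = 1`; `(T_i + 1)(T_i − q) = 0` for `1 ≤ i ≤ n−1`;
`T_0T_1T_0T_1 = T_1T_0T_1T_0`; `T_iT_{i+1}T_i = T_{i+1}T_iT_{i+1}` for `1 ≤ i ≤ n−2`;
`T_iT_j = T_jT_i` for `0 ≤ i < j−1 ≤ n−2`. -/
inductive HeckeRel (K : Type*) [Field K] (q : K) (n : ℕ) :
    FreeAlgebra K (Fin n) → FreeAlgebra K (Fin n) → Prop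
  | sq_zero (i : Fin n) (hi : (i : ℕ) = 0) :
      HeckeRel K q n (ι K i * ι K i) 1
  | quad (i : Fin n) (hi : 1 ≤ (i : ℕ)) :
      HeckeRel K q n ((ι K i + 1) * (ι K i - algebraMap K (FreeAlgebra K (Fin n)) q)) 0
  | braid_zero (i j : Fin n) (hi : (i : ℕ) = 0) (hj : (j : ℕ) = 1) :
      HeckeRel K q n (ι K i * ι K j * ι K i * ι K j) (ι K j * ι K i * ι K j * ι K i)
  | braid (i j : Fin n) (hi : 1 ≤ (i : ℕ)) (hj : (j : ℕ) = (i : ℕ) + 1) :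
      HeckeRel K q n (ι K i * ι K j * ι K i) (ι K j * ι K i * ι K j)
  | comm (i j : Fin n) (hij : (i : ℕ) + 1 < (j : ℕ)) :
      HeckeRel K q n (ι K i * ι K j) (ι K j * ι K i)

/-- The Hecke algebra `H(B_n)` of type `B_n` over `K` with parameters `(q, 1)`: the
quotient of the free `K`-algebra on `T_0, …, T_{n-1}` by the two-sided ideal generated
by the defining relations. -/
abbrev HeckeB (K : Type*) [Field K] (q : K) (n : ℕ) : Type _ :=
  RingQuot (HeckeRel K q n)

/-- The generator `T_i` of the Hecke algebra `H(B_n)`. -/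
noncomputable def heckeT (K : Type*) [Field K] (q : K) (n : ℕ) (i : Fin n) :
    HeckeB K q n :=
  RingQuot.mkAlgHom K (HeckeRel K q n) (ι K i)

/-- The element `T_u := T_0 T_1 T_0` of `H(B_n)` (for `n ≥ 2`). -/
noncomputable def heckeTu (K : Type*) [Field K] (q : K) (n : ℕ) (hn : 2 ≤ n) :
    HeckeB K q n :=
  heckeT K q n ⟨0, by omega⟩ * heckeT K q n ⟨1, by omega⟩ * heckeT K q n ⟨0, by omega⟩

/-- The subalgebra `H(D_n)` of `H(B_n)`, generated by `T_u = T_0T_1T_0` and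
`T_1, …, T_{n-1}`. -/
noncomputable def heckeD (K : Type*) [Field K] (q : K) (n : ℕ) (hn : 2 ≤ n) :
    Subalgebra K (HeckeB K q n) :=
  Algebra.adjoin K
    (insert (heckeTu K q n hn) {y | ∃ i : Fin n, 1 ≤ (i : ℕ) ∧ y = heckeT K q n i})

/-- Let `K` be a field, `q ∈ K` invertible, `n ≥ 3`, and `H(B_n)` the
Hecke algebra of type `B_n` over `K` with parameters `(q, 1)`. With `T_u := T_0T_1T_0`,
the following relations hold: `(T_u + 1)(T_u − q) = 0`; `T_uT_1 = T_1T_u`;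
`T_uT_2T_u = T_2T_uT_2`; and `T_uT_i = T_iT_u` for all `3 ≤ i ≤ n − 1`. -/
theorem stmt9 (K : Type*) [Field K] (q : K) (hq : IsUnit q) (n : ℕ) (hn : 3 ≤ n) :
    (heckeTu K q n (by omega) + 1) *
        (heckeTu K q n (by omega) - algebraMap K (HeckeB K q n) q) = 0 ∧
    heckeTu K q n (by omega) * heckeT K q n ⟨1, by omega⟩ =
      heckeT K q n ⟨1, by omega⟩ * heckeTu K q n (by omega) ∧
    heckeTu K q n (by omega) * heckeT K q n ⟨2, by omega⟩ * heckeTu K q n (by omega) =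
      heckeT K q n ⟨2, by omega⟩ * heckeTu K q n (by omega) * heckeT K q n ⟨2, by omega⟩ ∧
    ∀ i : Fin n, 3 ≤ (i : ℕ) →
      heckeTu K q n (by omega) * heckeT K q n i =
        heckeT K q n i * heckeTu K q n (by omega) := by
  have rel : ∀ {a b : FreeAlgebra K (Fin n)}, HeckeRel K q n a b →
      RingQuot.mkAlgHom K (HeckeRel K q n) a = RingQuot.mkAlgHom K (HeckeRel K q n) b :=
    fun h => RingQuot.mkAlgHom_rel K h
  set t0 : HeckeB K q n := heckeT K q n ⟨0, by omega⟩ with ht0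
  set t1 : HeckeB K q n := heckeT K q n ⟨1, by omega⟩ with ht1
  set t2 : HeckeB K q n := heckeT K q n ⟨2, by omega⟩ with ht2
  set c : HeckeB K q n := algebraMap K (HeckeB K q n) q with hc
  have h00 : t0 * t0 = 1 := by
    have := rel (HeckeRel.sq_zero (K := K) (q := q) ⟨0, by omega⟩ rfl)
    simpa [ht0, heckeT, map_mul, map_one] using this
  have h00' : ∀ x : HeckeB K q n, t0 * (t0 * x) = x := fun x => by
    rw [← mul_assoc, h00, one_mul]
  have h11 : (t1 + 1) * (t1 - c) = 0 := by
    have := rel (HeckeRel.quad (K := K) (q := q) ⟨1, by omega⟩ (by simp))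
    simpa [ht1, hc, heckeT, map_mul, map_add, map_sub, map_one, map_zero,
      AlgHom.commutes] using this
  have hbz : t0 * t1 * t0 * t1 = t1 * t0 * t1 * t0 := by
    have := rel (HeckeRel.braid_zero (K := K) (q := q) ⟨0, by omega⟩ ⟨1, by omega⟩ rfl rfl)
    simpa [ht0, ht1, heckeT, map_mul] using this
  have hb12 : t1 * t2 * t1 = t2 * t1 * t2 := by
    have := rel (HeckeRel.braid (K := K) (q := q) ⟨1, by omega⟩ ⟨2, by omega⟩ (by simp) rfl)
    simpa [ht1, ht2, heckeT, map_mul] using this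
  have hb12' : ∀ x : HeckeB K q n, t1 * (t2 * (t1 * x)) = t2 * (t1 * (t2 * x)) := fun x => by
    rw [← mul_assoc, ← mul_assoc, hb12, mul_assoc, mul_assoc]
  have h02 : t0 * t2 = t2 * t0 := by
    have := rel (HeckeRel.comm (K := K) (q := q) ⟨0, by omega⟩ ⟨2, by omega⟩ (by simp))
    simpa [ht0, ht2, heckeT, map_mul] using this
  have h02' : ∀ x : HeckeB K q n, t0 * (t2 * x) = t2 * (t0 * x) := fun x => by
    rw [← mul_assoc, h02, mul_assoc]
  have hcc : ∀ x : HeckeB K q n, c * x = x * c := fun x => Algebra.commutes q x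
  have hctr : ∀ x : HeckeB K q n, t0 * (c * x) = c * (t0 * x) := fun x => by
    rw [← mul_assoc, ← hcc t0, mul_assoc]
  -- quadratic relation for t1 in solved form
  have h11' : t1 * t1 = c * t1 - t1 + c := by
    have h := h11
    rw [add_mul, one_mul, mul_sub, ← hcc t1] at h
    rw [← sub_eq_zero,
      show t1 * t1 - (c * t1 - t1 + c) = t1 * t1 - c * t1 + (t1 - c) from by abel]
    exact h
  -- quadratic relation for Tu
  have hAA : t0 * t1 * t0 * (t0 * t1 * t0) = c * (t0 * t1 * t0) - t0 * t1 * t0 + c := by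
    calc t0 * t1 * t0 * (t0 * t1 * t0) = t0 * (t1 * (t0 * (t0 * (t1 * t0)))) := by
          simp only [mul_assoc]
      _ = t0 * ((t1 * t1) * t0) := by rw [h00', ← mul_assoc t1 t1 t0]
      _ = t0 * ((c * t1 - t1 + c) * t0) := by rw [h11']
      _ = c * (t0 * (t1 * t0)) - t0 * (t1 * t0) + c := by
          rw [add_mul, sub_mul, mul_add, mul_sub, mul_assoc c t1 t0, hctr, hctr, h00, mul_one]
      _ = c * (t0 * t1 * t0) - t0 * t1 * t0 + c := by simp only [mul_assoc]
  refine ⟨?_, ?_, ?_, ?_⟩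
  · show (t0 * t1 * t0 + 1) * (t0 * t1 * t0 - c) = 0
    rw [add_mul, one_mul, mul_sub, ← hcc (t0 * t1 * t0), hAA]
    abel
  · show t0 * t1 * t0 * t1 = t1 * (t0 * t1 * t0)
    rw [hbz]; simp only [mul_assoc]
  · show t0 * t1 * t0 * t2 * (t0 * t1 * t0) = t2 * (t0 * t1 * t0) * t2
    calc t0 * t1 * t0 * t2 * (t0 * t1 * t0)
        = t0 * (t1 * (t0 * (t2 * (t0 * (t1 * t0))))) := by simp only [mul_assoc]
      _ = t0 * (t1 * (t2 * (t0 * (t0 * (t1 * t0))))) := by rw [h02']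
      _ = t0 * (t1 * (t2 * (t1 * t0))) := by rw [h00']
      _ = t0 * (t2 * (t1 * (t2 * t0))) := by rw [hb12']
      _ = t2 * (t0 * (t1 * (t2 * t0))) := by rw [h02']
      _ = t2 * (t0 * (t1 * (t0 * t2))) := by rw [h02]
      _ = t2 * (t0 * t1 * t0) * t2 := by simp only [mul_assoc]
  · intro i hi
    have h0i : t0 * heckeT K q n i = heckeT K q n i * t0 := by
      have := rel (HeckeRel.comm (K := K) (q := q) ⟨0, by omega⟩ i (by simp; omega))
      simpa [ht0, heckeT, map_mul] using this
    have h1i : t1 * heckeT K q n i = heckeT K q n i * t1 := by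
      have := rel (HeckeRel.comm (K := K) (q := q) ⟨1, by omega⟩ i (by simp; omega))
      simpa [ht1, heckeT, map_mul] using this
    have h1i' : ∀ x, t1 * (heckeT K q n i * x) = heckeT K q n i * (t1 * x) := fun x => by
      rw [← mul_assoc, h1i, mul_assoc]
    have h0i' : ∀ x, t0 * (heckeT K q n i * x) = heckeT K q n i * (t0 * x) := fun x => by
      rw [← mul_assoc, h0i, mul_assoc]
    show t0 * t1 * t0 * heckeT K q n i = heckeT K q n i * (t0 * t1 * t0)
    calc t0 * t1 * t0 * heckeT K q n i = t0 * (t1 * (t0 * heckeT K q n i)) := by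
          simp only [mul_assoc]
      _ = t0 * (t1 * (heckeT K q n i * t0)) := by rw [h0i]
      _ = t0 * (heckeT K q n i * (t1 * t0)) := by rw [h1i']
      _ = heckeT K q n i * (t0 * (t1 * t0)) := by rw [h0i']
      _ = heckeT K q n i * (t0 * t1 * t0) := by simp only [mul_assoc]
end

section
/- Let K be a field, let q ∈ K be invertible, let n ≥ 2, and let H(B_n) be the Hecke algebra of type B_n over K with parameters (q, 1). There exists a K-algebra automorphism σ of H(B_n) determined on generators by σ(T_0) = −T_0 and σ(T_i) = T_i for 1 ≤ i ≤ n − 1. Moreover σ is an involution (σ ∘ σ = id), σ(T_0T_1T_0) = T_0T_1T_0, and σ fixes pointwise the subalgebra H(D_n) of H(B_n) generated by {T_0T_1T_0, T_1, …, T_{n−1}}. -/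
open FreeAlgebra

/-! Every defining relation of `H(B_n)` is homogeneous in the parity of the number of
occurrences of `T_0`, so negating `T_0` in the free algebra multiplies both sides of a
relation by the same sign and hence descends to the quotient. The resulting endomorphism
squares to the identity on generators, so it is an involutive automorphism; it fixes
`T_1, …, T_{n-1}` and `T_0T_1T_0`, hence every element of the subalgebra they generate. -/

theorem neg_mul_mul_neg {R : Type*} [Ring R] (a b : R) : -a * b * -a = a * b * a := by
  rw [mul_neg, neg_mul, neg_mul, neg_neg]

namespace HeckeB

variable {K : Type*} [Field K] {q : K} {n : ℕ}

noncomputable def freeSignFlip : FreeAlgebra K (Fin n) →ₐ[K] FreeAlgebra K (Fin n) :=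
  lift K fun i => if (i : ℕ) = 0 then -ι K i else ι K i

theorem freeSignFlip_ι (i : Fin n) :
    freeSignFlip (ι K i) = if (i : ℕ) = 0 then -ι K i else ι K i :=
  lift_ι_apply _ _

theorem freeSignFlip_ι_of_ne_zero {i : Fin n} (hi : (i : ℕ) ≠ 0) :
    freeSignFlip (ι K i) = ι K i :=
  (freeSignFlip_ι i).trans (if_neg hi)

theorem freeSignFlip_ι_of_eq_zero {i : Fin n} (hi : (i : ℕ) = 0) :
    freeSignFlip (ι K i) = -ι K i :=
  (freeSignFlip_ι i).trans (if_pos hi)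

theorem _root_.HeckeRel.freeSignFlip_eq_smul {a b : FreeAlgebra K (Fin n)}
    (h : HeckeRel K q n a b) : ∃ ε : K, freeSignFlip a = ε • a ∧ freeSignFlip b = ε • b := by
  cases h with
  | sq_zero i hi =>
    exact ⟨1, by simp [freeSignFlip_ι_of_eq_zero hi]⟩
  | quad i hi =>
    exact ⟨1, by simp [freeSignFlip_ι_of_ne_zero (i := i) (by omega)]⟩
  | braid_zero i j hi hj =>
    exact ⟨1, by simp [freeSignFlip_ι_of_eq_zero hi, freeSignFlip_ι_of_ne_zero (i := j) (by omega)]⟩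
  | braid i j hi hj =>
    exact ⟨1, by simp [freeSignFlip_ι_of_ne_zero (i := i) (by omega),
      freeSignFlip_ι_of_ne_zero (i := j) (by omega)]⟩
  | comm i j hij =>
    have hj := freeSignFlip_ι_of_ne_zero (K := K) (i := j) (by omega)
    by_cases hi : (i : ℕ) = 0
    · exact ⟨-1, by simp [freeSignFlip_ι_of_eq_zero hi, hj]⟩
    · exact ⟨1, by simp [freeSignFlip_ι_of_ne_zero hi, hj]⟩

variable (K q n) in
noncomputable def signFlip : HeckeB K q n →ₐ[K] HeckeB K q n :=
  RingQuot.liftAlgHom K ⟨(RingQuot.mkAlgHom K (HeckeRel K q n)).comp freeSignFlip,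
    fun _ _ h => by
      obtain ⟨ε, ha, hb⟩ := h.freeSignFlip_eq_smul
      simp only [AlgHom.comp_apply, ha, hb, map_smul, RingQuot.mkAlgHom_rel K h]⟩

theorem signFlip_heckeT_of_eq_zero {i : Fin n} (hi : (i : ℕ) = 0) :
    signFlip K q n (heckeT K q n i) = -heckeT K q n i := by
  rw [signFlip, heckeT, RingQuot.liftAlgHom_mkAlgHom_apply, AlgHom.comp_apply,
    freeSignFlip_ι_of_eq_zero hi, map_neg]

theorem signFlip_heckeT_of_ne_zero {i : Fin n} (hi : (i : ℕ) ≠ 0) :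
    signFlip K q n (heckeT K q n i) = heckeT K q n i := by
  rw [signFlip, heckeT, RingQuot.liftAlgHom_mkAlgHom_apply, AlgHom.comp_apply,
    freeSignFlip_ι_of_ne_zero hi]

theorem algHom_ext {A : Type*} [Semiring A] [Algebra K A] {f g : HeckeB K q n →ₐ[K] A}
    (h : ∀ i, f (heckeT K q n i) = g (heckeT K q n i)) : f = g :=
  RingQuot.ringQuot_ext' _ _ _ <| FreeAlgebra.hom_ext <| funext h

theorem signFlip_comp_signFlip : (signFlip K q n).comp (signFlip K q n) = AlgHom.id K _ :=
  algHom_ext fun i => by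
    by_cases hi : (i : ℕ) = 0
    · simp [signFlip_heckeT_of_eq_zero hi]
    · simp [signFlip_heckeT_of_ne_zero hi]

theorem signFlip_heckeTu (hn : 2 ≤ n) : signFlip K q n (heckeTu K q n hn) = heckeTu K q n hn := by
  rw [heckeTu, map_mul, map_mul, signFlip_heckeT_of_eq_zero rfl,
    signFlip_heckeT_of_ne_zero one_ne_zero]
  exact neg_mul_mul_neg _ _

theorem heckeD_le_equalizer_signFlip (hn : 2 ≤ n) :
    heckeD K q n hn ≤ AlgHom.equalizer (signFlip K q n) (AlgHom.id K _) := by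
  refine Algebra.adjoin_le (Set.insert_subset (signFlip_heckeTu hn) ?_)
  rintro _ ⟨i, hi, rfl⟩
  exact signFlip_heckeT_of_ne_zero (by omega)

end HeckeB

/-- Let `K` be a field, `q ∈ K` invertible, `n ≥ 2`. There exists a
`K`-algebra automorphism `σ` of `H(B_n)` with `σ T_0 = −T_0` and `σ T_i = T_i` for
`1 ≤ i ≤ n − 1`; moreover `σ` is an involution, `σ (T_0T_1T_0) = T_0T_1T_0`, and `σ`
fixes pointwise the subalgebra `H(D_n)` generated by `{T_0T_1T_0, T_1, …, T_{n−1}}`. -/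
theorem stmt10 (K : Type*) [Field K] (q : K) (n : ℕ) (hn : 2 ≤ n) :
    ∃ σ : HeckeB K q n ≃ₐ[K] HeckeB K q n,
      σ (heckeT K q n ⟨0, by omega⟩) = - heckeT K q n ⟨0, by omega⟩ ∧
      (∀ i : Fin n, 1 ≤ (i : ℕ) → σ (heckeT K q n i) = heckeT K q n i) ∧
      (∀ x : HeckeB K q n, σ (σ x) = x) ∧
      σ (heckeTu K q n hn) = heckeTu K q n hn ∧
      ∀ x ∈ heckeD K q n hn, σ x = x := by
  have hσσ := HeckeB.signFlip_comp_signFlip (K := K) (q := q) (n := n)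
  exact ⟨AlgEquiv.ofAlgHom _ _ hσσ hσσ, HeckeB.signFlip_heckeT_of_eq_zero rfl,
    fun i hi => HeckeB.signFlip_heckeT_of_ne_zero (by omega), AlgHom.congr_fun hσσ,
    HeckeB.signFlip_heckeTu hn, fun x hx => HeckeB.heckeD_le_equalizer_signFlip hn hx⟩
end

section
/- Let K be a field, let q ∈ K be invertible, let n ≥ 2, and let H(B_n) be the Hecke algebra of type B_n over K with parameters (q, 1). There exists a K-algebra automorphism τ of H(B_n) determined on generators by τ(T_1) = T_0T_1T_0 and τ(T_i) = T_i for all i ≠ 1 (0 ≤ i ≤ n − 1). Moreover τ is an involution (τ ∘ τ = id), τ(T_0T_1T_0) = T_1, and τ maps the subalgebra H(D_n) of H(B_n) generated by {T_0T_1T_0, T_1, …, T_{n−1}} isomorphically onto itself. -/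
open FreeAlgebra

section Aux

variable {K : Type*} [Field K] {q : K} {n : ℕ}

lemma hecke_sq (i : Fin n) (hi : (i : ℕ) = 0) :
    heckeT K q n i * heckeT K q n i = 1 := by
  have := RingQuot.mkAlgHom_rel K (HeckeRel.sq_zero (q := q) i hi)
  simpa [heckeT] using this

lemma hecke_quad (i : Fin n) (hi : 1 ≤ (i : ℕ)) :
    (heckeT K q n i + 1) * (heckeT K q n i - algebraMap K (HeckeB K q n) q) = 0 := by
  have := RingQuot.mkAlgHom_rel K (HeckeRel.quad (q := q) i hi)
  simpa [heckeT] using this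

lemma hecke_braid_zero (i j : Fin n) (hi : (i : ℕ) = 0) (hj : (j : ℕ) = 1) :
    heckeT K q n i * heckeT K q n j * heckeT K q n i * heckeT K q n j =
      heckeT K q n j * heckeT K q n i * heckeT K q n j * heckeT K q n i := by
  have := RingQuot.mkAlgHom_rel K (HeckeRel.braid_zero (q := q) i j hi hj)
  simpa [heckeT] using this

lemma hecke_braid (i j : Fin n) (hi : 1 ≤ (i : ℕ)) (hj : (j : ℕ) = (i : ℕ) + 1) :
    heckeT K q n i * heckeT K q n j * heckeT K q n i =
      heckeT K q n j * heckeT K q n i * heckeT K q n j := by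
  have := RingQuot.mkAlgHom_rel K (HeckeRel.braid (q := q) i j hi hj)
  simpa [heckeT] using this

lemma hecke_comm (i j : Fin n) (hij : (i : ℕ) + 1 < (j : ℕ)) :
    heckeT K q n i * heckeT K q n j = heckeT K q n j * heckeT K q n i := by
  have := RingQuot.mkAlgHom_rel K (HeckeRel.comm (q := q) i j hij)
  simpa [heckeT] using this

end Aux

section Tau

variable (K : Type*) [Field K] (q : K) (n : ℕ)

noncomputable def tauFun : Fin n → HeckeB K q n := fun i =>
  if h : (i : ℕ) = 1 then heckeTu K q n (by have := i.2; omega) else heckeT K q n i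


lemma tauFun_rel : ∀ ⦃a b : FreeAlgebra K (Fin n)⦄, HeckeRel K q n a b →
    FreeAlgebra.lift K (tauFun K q n) a = FreeAlgebra.lift K (tauFun K q n) b := by
  intro a b h
  induction h with
  | sq_zero i hi =>
      have hi1 : (i : ℕ) ≠ 1 := by omega
      simp only [map_mul, map_one, lift_ι_apply, tauFun, hi1, dif_neg, not_false_iff]
      exact hecke_sq i hi
  | quad i hi =>
      simp only [map_mul, map_add, map_sub, map_one, map_zero, AlgHom.commutes, lift_ι_apply]
      by_cases h1 : (i : ℕ) = 1
      · have hn : 2 ≤ n := by have := i.2; omega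
        set T0 : HeckeB K q n := heckeT K q n ⟨0, by omega⟩ with hT0
        set T1 : HeckeB K q n := heckeT K q n ⟨1, by omega⟩ with hT1
        set aq : HeckeB K q n := algebraMap K (HeckeB K q n) q with haq
        have h00 : T0 * T0 = 1 := hecke_sq _ rfl
        have hu : tauFun K q n i = T0 * T1 * T0 := by
          simp only [tauFun]; rw [dif_pos h1]; rfl
        have e1 : tauFun K q n i + 1 = T0 * (T1 + 1) * T0 := by
          rw [hu, mul_add, add_mul, mul_one, h00]
        have e2 : tauFun K q n i - aq = T0 * (T1 - aq) * T0 := by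
          rw [hu, mul_sub, sub_mul]
          congr 1
          rw [show T0 * aq = aq * T0 from (Algebra.commutes q T0).symm, mul_assoc, h00, mul_one]
        rw [e1, e2]
        have key : T0 * (T1 + 1) * T0 * (T0 * (T1 - aq) * T0)
            = T0 * ((T1 + 1) * (T1 - aq)) * T0 := by
          simp only [mul_assoc]
          rw [← mul_assoc T0 T0, h00, one_mul]
        rw [key, hecke_quad ⟨1, by omega⟩ (by norm_num), mul_zero, zero_mul]
      · simp only [tauFun, h1, dif_neg, not_false_iff]
        exact hecke_quad i hi
  | braid_zero i j hi hj =>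
      have hn : 2 ≤ n := by have := j.2; omega
      set T0 : HeckeB K q n := heckeT K q n ⟨0, by omega⟩ with hT0
      set T1 : HeckeB K q n := heckeT K q n ⟨1, by omega⟩ with hT1
      have h00 : T0 * T0 = 1 := hecke_sq _ rfl
      have h00' : ∀ x, T0 * (T0 * x) = x := fun x => by rw [← mul_assoc, h00, one_mul]
      have hfi : tauFun K q n i = T0 := by
        have h1 : (i : ℕ) ≠ 1 := by omega
        simp only [tauFun]; rw [dif_neg h1, hT0]
        exact congrArg (heckeT K q n) (Fin.ext hi)
      have hfj : tauFun K q n j = T0 * T1 * T0 := by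
        simp only [tauFun]; rw [dif_pos hj]; rfl
      simp only [map_mul, lift_ι_apply, hfi, hfj]
      have hb := hecke_braid_zero (K := K) (q := q) (⟨0, by omega⟩ : Fin n) ⟨1, by omega⟩ rfl rfl
      rw [← hT0, ← hT1] at hb
      simp only [mul_assoc, h00', h00, mul_one]
      simp only [mul_assoc] at hb
      exact hb.symm
  | braid i j hi hj =>
      by_cases h1 : (i : ℕ) = 1
      · have hn : 3 ≤ n := by have := j.2; omega
        set T0 : HeckeB K q n := heckeT K q n ⟨0, by omega⟩ with hT0
        set T1 : HeckeB K q n := heckeT K q n ⟨1, by omega⟩ with hT1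
        set T2 : HeckeB K q n := heckeT K q n j with hT2
        have h00 : T0 * T0 = 1 := hecke_sq _ rfl
        have h00' : ∀ x, T0 * (T0 * x) = x := fun x => by rw [← mul_assoc, h00, one_mul]
        have hc02 : T0 * T2 = T2 * T0 := hecke_comm _ _ (by simp [hj, h1])
        have hc02' : ∀ x, T0 * (T2 * x) = T2 * (T0 * x) := fun x => by
          rw [← mul_assoc, hc02, mul_assoc]
        have hb12 := hecke_braid (K := K) (q := q) (⟨1, by omega⟩ : Fin n) j (by norm_num) (by simp [hj, h1])
        rw [← hT1, ← hT2] at hb12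
        have hb12' : ∀ x, T1 * (T2 * (T1 * x)) = T2 * (T1 * (T2 * x)) := fun x => by
          rw [← mul_assoc, ← mul_assoc, hb12, mul_assoc, mul_assoc]
        have hj1 : (j : ℕ) ≠ 1 := by omega
        have hfi : tauFun K q n i = T0 * T1 * T0 := by
          simp only [tauFun]; rw [dif_pos h1]; rfl
        have hfj : tauFun K q n j = T2 := by
          simp only [tauFun]; rw [dif_neg hj1]
        simp only [map_mul, lift_ι_apply, hfi, hfj]
        simp only [mul_assoc, hc02', h00', hb12']
        rw [← hc02]
      · have hj1 : (j : ℕ) ≠ 1 := by omega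
        have hi1 : (i : ℕ) ≠ 1 := h1
        simp only [map_mul, lift_ι_apply, tauFun, hi1, hj1, dif_neg, not_false_iff]
        exact hecke_braid i j hi hj
  | comm i j hij =>
      have hj1 : (j : ℕ) ≠ 1 := by omega
      by_cases h1 : (i : ℕ) = 1
      · have hn : 2 ≤ n := by have := i.2; omega
        set T0 : HeckeB K q n := heckeT K q n ⟨0, by omega⟩ with hT0
        set T1 : HeckeB K q n := heckeT K q n ⟨1, by omega⟩ with hT1
        set Tj : HeckeB K q n := heckeT K q n j with hTj
        have hc0 : T0 * Tj = Tj * T0 := hecke_comm _ _ (by simp; omega)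
        have hc1 : T1 * Tj = Tj * T1 := hecke_comm _ _ (by simp; omega)
        have hfi : tauFun K q n i = T0 * T1 * T0 := by
          simp only [tauFun]; rw [dif_pos h1]; rfl
        have hfj : tauFun K q n j = Tj := by
          simp only [tauFun]; rw [dif_neg hj1]
        simp only [map_mul, lift_ι_apply, hfi, hfj]
        calc T0 * T1 * T0 * Tj = T0 * T1 * (T0 * Tj) := by rw [mul_assoc]
          _ = T0 * (T1 * Tj) * T0 := by rw [hc0, ← mul_assoc, ← mul_assoc]
          _ = T0 * Tj * T1 * T0 := by rw [hc1, ← mul_assoc]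
          _ = Tj * (T0 * T1 * T0) := by rw [hc0]; simp [mul_assoc]
      · simp only [map_mul, lift_ι_apply, tauFun, h1, hj1, dif_neg, not_false_iff]
        exact hecke_comm i j hij

noncomputable def tauHom : HeckeB K q n →ₐ[K] HeckeB K q n :=
  RingQuot.liftAlgHom K ⟨FreeAlgebra.lift K (tauFun K q n), tauFun_rel K q n⟩

lemma tauHom_T (i : Fin n) : tauHom K q n (heckeT K q n i) = tauFun K q n i := by
  rw [tauHom, heckeT, RingQuot.liftAlgHom_mkAlgHom_apply, lift_ι_apply]

lemma tauHom_T_ne (i : Fin n) (h : (i : ℕ) ≠ 1) :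
    tauHom K q n (heckeT K q n i) = heckeT K q n i := by
  rw [tauHom_T]; simp only [tauFun]; rw [dif_neg h]

lemma tauHom_T_one (hn : 2 ≤ n) :
    tauHom K q n (heckeT K q n ⟨1, by omega⟩) = heckeTu K q n hn := by
  rw [tauHom_T]; simp only [tauFun]; rw [dif_pos trivial]

lemma tauHom_Tu (hn : 2 ≤ n) :
    tauHom K q n (heckeTu K q n hn) = heckeT K q n ⟨1, by omega⟩ := by
  set T0 : HeckeB K q n := heckeT K q n ⟨0, by omega⟩ with hT0
  set T1 : HeckeB K q n := heckeT K q n ⟨1, by omega⟩ with hT1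
  have h00 : T0 * T0 = 1 := hecke_sq _ rfl
  have : heckeTu K q n hn = T0 * T1 * T0 := rfl
  rw [this, map_mul, map_mul, tauHom_T_ne K q n ⟨0, by omega⟩ (by norm_num),
    tauHom_T_one K q n hn]
  show T0 * (T0 * T1 * T0) * T0 = T1
  rw [← mul_assoc, ← mul_assoc, h00, one_mul, mul_assoc, h00, mul_one]

lemma tauHom_invol : (tauHom K q n).comp (tauHom K q n) = AlgHom.id K (HeckeB K q n) := by
  apply RingQuot.ringQuot_ext'
  apply FreeAlgebra.hom_ext
  funext i
  simp only [Function.comp_apply, AlgHom.coe_comp, AlgHom.coe_id, id_eq]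
  show tauHom K q n (tauHom K q n (heckeT K q n i)) = heckeT K q n i
  by_cases h1 : (i : ℕ) = 1
  · have hn : 2 ≤ n := by have := i.2; omega
    have hi : i = ⟨1, by omega⟩ := Fin.ext h1
    rw [hi, tauHom_T_one K q n hn, tauHom_Tu K q n hn]
  · rw [tauHom_T_ne K q n i h1, tauHom_T_ne K q n i h1]

noncomputable def tauEquiv : HeckeB K q n ≃ₐ[K] HeckeB K q n :=
  AlgEquiv.ofAlgHom (tauHom K q n) (tauHom K q n) (tauHom_invol K q n) (tauHom_invol K q n)

end Tau

/-- Let `K` be a field, `q ∈ K` invertible, `n ≥ 2`. There exists a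
`K`-algebra automorphism `τ` of `H(B_n)` with `τ T_1 = T_0T_1T_0` and `τ T_i = T_i` for
all `i ≠ 1`; moreover `τ` is an involution, `τ (T_0T_1T_0) = T_1`, and `τ` maps the
subalgebra `H(D_n)` generated by `{T_0T_1T_0, T_1, …, T_{n−1}}` isomorphically onto
itself. -/
theorem stmt11 (K : Type*) [Field K] (q : K) (hq : IsUnit q) (n : ℕ) (hn : 2 ≤ n) :
    ∃ τ : HeckeB K q n ≃ₐ[K] HeckeB K q n,
      τ (heckeT K q n ⟨1, by omega⟩) = heckeTu K q n hn ∧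
      (∀ i : Fin n, (i : ℕ) ≠ 1 → τ (heckeT K q n i) = heckeT K q n i) ∧
      (∀ x : HeckeB K q n, τ (τ x) = x) ∧
      τ (heckeTu K q n hn) = heckeT K q n ⟨1, by omega⟩ ∧
      Subalgebra.map τ.toAlgHom (heckeD K q n hn) = heckeD K q n hn := by
  refine ⟨tauEquiv K q n, ?_, ?_, ?_, ?_, ?_⟩
  · exact tauHom_T_one K q n hn
  · exact fun i hi => tauHom_T_ne K q n i hi
  · exact fun x => AlgHom.congr_fun (tauHom_invol K q n) x
  · exact tauHom_Tu K q n hn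
  · have hmap : (tauEquiv K q n).toAlgHom = tauHom K q n := rfl
    rw [hmap, heckeD, AlgHom.map_adjoin]
    congr 1
    set S := insert (heckeTu K q n hn)
      {y | ∃ i : Fin n, 1 ≤ (i : ℕ) ∧ y = heckeT K q n i} with hS
    have hsub : tauHom K q n '' S ⊆ S := by
      rintro x ⟨y, hy, rfl⟩
      rcases hy with rfl | ⟨i, hi1, rfl⟩
      · rw [tauHom_Tu K q n hn]
        exact Or.inr ⟨⟨1, by omega⟩, by norm_num, rfl⟩
      · by_cases h1 : (i : ℕ) = 1
        · have : heckeT K q n i = heckeT K q n ⟨1, by omega⟩ :=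
            congrArg (heckeT K q n) (Fin.ext h1)
          rw [this, tauHom_T_one K q n hn]
          exact Or.inl rfl
        · rw [tauHom_T_ne K q n i h1]
          exact Or.inr ⟨i, hi1, rfl⟩
    refine Set.Subset.antisymm hsub ?_
    intro x hx
    refine ⟨tauHom K q n x, hsub ⟨x, hx, rfl⟩, ?_⟩
    exact AlgHom.congr_fun (tauHom_invol K q n) x
end
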